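/- arXiv:1806.09817 — 5 statements merged into one kernel-verified Lean document; each statement's English description precedes it below -/
import Mathlib

section
/- In the planted clique model with parameters n, k, Q (n ≥ 2, 1 ≤ k ≤ n), the probability that there exists a vertex v ∈ Q with deg(v) < (k−1) + (n−k)/2 − √(n·ln n) is at most 1/n. -/
open MeasureTheory

namespace Stmt2

noncomputable section
open scoped Classical

variable {n : ℕ}

/-- Both endpoints of the unordered pair `p` lie in `Q`. -/
def BothInQ (Q : Finset (Fin n)) (p : Sym2 (Fin n)) : Prop := ∀ x ∈ p, x ∈ Q

/-- Index type: unordered pairs of distinct vertices not both lying in `Q`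
(the "remaining pairs", whose edge-status is random). -/
def FreePair (n : ℕ) (Q : Finset (Fin n)) : Type :=
  {p : Sym2 (Fin n) // ¬ p.IsDiag ∧ ¬ BothInQ Q p}

instance (n : ℕ) (Q : Finset (Fin n)) : Fintype (FreePair n Q) := by
  unfold FreePair; infer_instance

/-- Sample space of the planted clique model: one Boolean for each free pair. -/
def Ω (n : ℕ) (Q : Finset (Fin n)) : Type := FreePair n Q → Bool

instance (n : ℕ) (Q : Finset (Fin n)) : MeasurableSpace (Ω n Q) := MeasurableSpace.pi

/-- The Bernoulli(1/2) measure on `Bool`. -/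
def bernoulliHalf : Measure Bool := (PMF.bernoulli (1 / 2) (by norm_num)).toMeasure

instance : IsProbabilityMeasure bernoulliHalf := PMF.toMeasure.isProbabilityMeasure _

/-- The planted clique measure: each remaining pair is an edge independently w.p. 1/2. -/
def plantedClique (n : ℕ) (Q : Finset (Fin n)) : Measure (Ω n Q) :=
  Measure.pi fun _ => bernoulliHalf

/-- `u` and `v` are adjacent in the planted clique graph: they are distinct, and
either both lie in `Q` (a planted clique edge) or else the coin of the pair `{u,v}`
came up `true`. -/
def Adj (Q : Finset (Fin n)) (ω : Ω n Q) (u v : Fin n) : Prop :=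
  ∃ hne : u ≠ v,
    BothInQ Q s(u, v) ∨
      ∃ h : ¬ BothInQ Q s(u, v),
        ω ⟨s(u, v), ⟨fun hd => hne (Sym2.mk_isDiag_iff.mp hd), h⟩⟩ = true

/-- Degree of vertex `v` in the planted clique graph: its number of neighbors. -/
def deg (Q : Finset (Fin n)) (ω : Ω n Q) (v : Fin n) : ℕ :=
  (Finset.univ.filter fun u : Fin n => Adj Q ω u v).card

end

/-!
For `v ∈ Q`, the neighbours of `v` are the other `k - 1` vertices of `Q` together with those
`u ∉ Q` whose coin on `{u, v}` shows `true`; these are `n - k` independent fair coins. Hoeffding's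
inequality bounds the probability that fewer than `(n - k) / 2 - t` of them show `true` by
`exp (-2 t² / (n - k)) ≤ exp (-2 log n) = 1 / n²` at `t = √(n log n)`, and a union bound over
the `k ≤ n` vertices of `Q` gives `k / n² ≤ 1 / n`.
-/

open ProbabilityTheory Finset

noncomputable abbrev fairCoins (ι : Type*) [Fintype ι] : Measure (ι → Bool) :=
  Measure.pi fun _ => bernoulliHalf

lemma integral_bernoulliHalf (f : Bool → ℝ) :
    ∫ b, f b ∂bernoulliHalf = (f true + f false) / 2 := by
  rw [bernoulliHalf, PMF.integral_eq_sum]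
  simp [PMF.bernoulli_apply]
  ring

lemma hasSubgaussianMGF_bernoulliHalf :
    HasSubgaussianMGF (fun b : Bool => 1 / 2 - if b then 1 else 0) ((1 / 2) ^ 2) bernoulliHalf := by
  convert hasSubgaussianMGF_of_mem_Icc_of_integral_eq_zero (a := -1 / 2) (b := 1 / 2)
    (X := fun b : Bool => 1 / 2 - if b then (1 : ℝ) else 0) (μ := bernoulliHalf)
    Measurable.of_discrete.aemeasurable (ae_of_all _ fun b => by cases b <;> norm_num)
    (by rw [integral_bernoulliHalf]; norm_num)
  norm_num

section FairCoins

variable {ι : Type*} [Fintype ι]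

theorem fairCoins_real_card_filter_le_half_sub_le (S : Finset ι) {ε : ℝ} (hε : 0 ≤ ε) :
    (fairCoins ι).real {ω | (#{i ∈ S | ω i} : ℝ) ≤ #S / 2 - ε} ≤ Real.exp (-2 * ε ^ 2 / #S) := by
  have hHoeffding := HasSubgaussianMGF.measure_sum_ge_le_of_iIndepFun (s := S)
    (iIndepFun_pi (μ := fun _ : ι => bernoulliHalf) fun _ => Measurable.of_discrete.aemeasurable)
    (fun i _ => .of_map (measurable_pi_apply i).aemeasurable
      ((measurePreserving_eval (fun _ : ι => bernoulliHalf) i).map_eq ▸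
        hasSubgaussianMGF_bernoulliHalf)) hε
  have hvar : ((∑ _i ∈ S, (1 / 2 : NNReal) ^ 2 : NNReal) : ℝ) = #S / 4 := by
    simp only [sum_const, nsmul_eq_mul]
    norm_num
    ring
  rw [hvar] at hHoeffding
  convert hHoeffding using 2
  · ext ω
    simp only [Set.mem_ofPred_eq, sum_sub_distrib, sum_const, card_filter, nsmul_eq_mul]
    push_cast
    constructor <;> intro h <;> linarith
  · ring

theorem fairCoins_real_card_filter_lt_half_sub_sqrt_le (S : Finset ι) {N : ℕ} (hSN : #S ≤ N) :
    (fairCoins ι).real {ω | (#{i ∈ S | ω i} : ℝ) < #S / 2 - √(N * Real.log N)} ≤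
      ((N : ℝ) ^ 2)⁻¹ := by
  set τ := √(N * Real.log N)
  have hτ : 0 ≤ τ := Real.sqrt_nonneg _
  rcases (#S).eq_zero_or_pos with hS0 | hSpos
  · have hempty : {ω : ι → Bool | (#{i ∈ S | ω i} : ℝ) < #S / 2 - τ} = ∅ := by
      ext ω
      simp only [hS0, Set.mem_ofPred_eq, Set.mem_empty_iff_false, iff_false, not_lt]
      linarith [(#{i ∈ S | ω i}).cast_nonneg (α := ℝ)]
    rw [hempty, measureReal_empty]
    positivity
  have hN : (0 : ℝ) < N := by exact_mod_cast hSpos.trans_le hSN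
  calc (fairCoins ι).real {ω | (#{i ∈ S | ω i} : ℝ) < #S / 2 - τ}
      ≤ (fairCoins ι).real {ω | (#{i ∈ S | ω i} : ℝ) ≤ #S / 2 - τ} :=
        measureReal_mono fun _ hω => le_of_lt (α := ℝ) hω
    _ ≤ Real.exp (-2 * τ ^ 2 / #S) := fairCoins_real_card_filter_le_half_sub_le S hτ
    _ ≤ Real.exp (-2 * Real.log N) := by
        gcongr
        rw [neg_mul, neg_mul, neg_div, neg_le_neg_iff, le_div_iff₀ (by exact_mod_cast hSpos),
          Real.sq_sqrt (by positivity)]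
        have hSN' : (#S : ℝ) ≤ N := by exact_mod_cast hSN
        nlinarith [Real.log_natCast_nonneg N]
    _ = ((N : ℝ) ^ 2)⁻¹ := by
        rw [neg_mul, Real.exp_neg, two_mul, Real.exp_add, Real.exp_log hN, sq]

end FairCoins

variable {n : ℕ} {Q : Finset (Fin n)} {v : Fin n}

instance : IsProbabilityMeasure (plantedClique n Q) :=
  inferInstanceAs (IsProbabilityMeasure (fairCoins (FreePair n Q)))

def pairWith (hv : v ∈ Q) {u : Fin n} (hu : u ∉ Q) : FreePair n Q :=
  ⟨s(u, v), fun hd => hu (Sym2.mk_isDiag_iff.mp hd ▸ hv),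
    fun hb => hu (hb u (Sym2.mem_mk_left u v))⟩

lemma pairWith_inj (hv : v ∈ Q) {u w : Fin n} (hu : u ∉ Q) (hw : w ∉ Q) :
    pairWith hv hu = pairWith hv hw ↔ u = w :=
  Subtype.ext_iff.trans Sym2.congr_left

lemma exists_pairWith_eq (hv : v ∈ Q) (p : FreePair n Q) (hp : v ∈ p.1) :
    ∃ u, ∃ hu : u ∉ Q, pairWith hv hu = p := by
  have hpu := Sym2.other_spec hp
  refine ⟨Sym2.Mem.other hp, fun hu => p.2.2 fun x hx => ?_, Subtype.ext ?_⟩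
  · rw [← hpu, Sym2.mem_iff] at hx
    rcases hx with rfl | rfl <;> assumption
  · exact Sym2.eq_swap.trans hpu

noncomputable def incidentPairs (Q : Finset (Fin n)) (v : Fin n) : Finset (FreePair n Q) :=
  {p | v ∈ p.1}

lemma card_filter_incidentPairs (hv : v ∈ Q) (P : FreePair n Q → Bool) :
    #{p ∈ incidentPairs Q v | P p} = #{u : Fin n | ∃ hu : u ∉ Q, P (pairWith hv hu)} := by
  symm
  refine card_bij (fun u hu => pairWith hv (mem_filter.1 hu).2.fst) (fun u hu => ?_)
    (fun _ _ _ _ => (pairWith_inj hv _ _).1) (fun p hp => ?_)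
  · obtain ⟨hu, hP⟩ := (mem_filter.1 hu).2
    exact mem_filter.2 ⟨mem_filter.2 ⟨mem_univ _, Sym2.mem_mk_right u v⟩, hP⟩
  · obtain ⟨hvp, hP⟩ := mem_filter.1 hp
    obtain ⟨u, hu, rfl⟩ := exists_pairWith_eq hv p (mem_filter.1 hvp).2
    exact ⟨u, mem_filter.2 ⟨mem_univ _, hu, hP⟩, rfl⟩

lemma card_incidentPairs (hv : v ∈ Q) : #(incidentPairs Q v) = n - #Q := by
  have h := card_filter_incidentPairs hv fun _ => true
  rw [filter_true_of_mem fun _ _ => rfl] at h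
  simp only [exists_prop, and_true, filter_notMem_eq_sdiff] at h
  rw [h, card_univ_sdiff, Fintype.card_fin]

-- `ω` ranges over `FreePair n Q → Bool` rather than `Ω n Q`: instance search does not unfold
-- `Ω`, so it cannot decide `ω p = true` for `ω : Ω n Q`, which the filters below need.
lemma adj_iff_of_mem (hv : v ∈ Q) (ω : FreePair n Q → Bool) (u : Fin n) :
    Adj Q ω u v ↔ u ∈ Q.erase v ∨ ∃ hu : u ∉ Q, ω (pairWith hv hu) = true := by
  by_cases hu : u ∈ Q
  · have hboth : BothInQ Q s(u, v) := fun x hx => by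
      rcases Sym2.mem_iff.1 hx with rfl | rfl <;> assumption
    simp [Adj, hu, hboth, ne_comm]
  · have hne : u ≠ v := fun h => hu (h ▸ hv)
    have hboth : ¬ BothInQ Q s(u, v) := fun hb => hu (hb u (Sym2.mem_mk_left u v))
    simp [Adj, hu, hboth, hne, pairWith]

lemma deg_eq_of_mem (hv : v ∈ Q) (ω : FreePair n Q → Bool) :
    deg Q ω v = (#Q - 1) + #{p ∈ incidentPairs Q v | ω p} := by
  classical
  have hneighbors : ({u | Adj Q ω u v} : Finset (Fin n)) =
      Q.erase v ∪ ({u | ∃ hu : u ∉ Q, ω (pairWith hv hu)} : Finset (Fin n)) := by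
    ext u
    simp [adj_iff_of_mem hv]
  unfold deg
  rw [hneighbors, card_union_of_disjoint, card_erase_of_mem hv, card_filter_incidentPairs hv ω]
  exact disjoint_left.2 fun u hu h => (mem_filter.1 h).2.fst (mem_of_mem_erase hu)

lemma plantedClique_real_deg_lt_le (hv : v ∈ Q) :
    (plantedClique n Q).real {ω : Ω n Q | (deg Q ω v : ℝ) <
        ((#Q : ℝ) - 1) + ((n : ℝ) - #Q) / 2 - √(n * Real.log n)} ≤ ((n : ℝ) ^ 2)⁻¹ := by
  have hS : #(incidentPairs Q v) ≤ n := (card_incidentPairs hv).trans_le (Nat.sub_le n #Q)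
  refine (measureReal_mono ?_).trans
    (fairCoins_real_card_filter_lt_half_sub_sqrt_le (incidentPairs Q v) hS)
  intro (ω : FreePair n Q → Bool) (hω : (deg Q ω v : ℝ) < _)
  change (_ : ℝ) < _
  rw [deg_eq_of_mem hv, Nat.cast_add, Nat.cast_sub (card_pos.2 ⟨v, hv⟩), Nat.cast_one] at hω
  rw [card_incidentPairs hv, Nat.cast_sub (card_le_univ Q |>.trans_eq (Fintype.card_fin n))]
  linarith

theorem clique_vertex_degree_lower_general (n k : ℕ) (Q : Finset (Fin n)) (hQ : Q.card = k) :
    plantedClique n Q {ω : Ω n Q | ∃ v ∈ Q,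
        (deg Q ω v : ℝ) <
          ((k : ℝ) - 1) + ((n : ℝ) - k) / 2 - Real.sqrt (n * Real.log n)} ≤
      ENNReal.ofReal (1 / n) := by
  subst hQ
  rw [← ofReal_measureReal]
  refine ENNReal.ofReal_le_ofReal ?_
  calc _ ≤ ∑ v ∈ Q, (plantedClique n Q).real {ω : Ω n Q | (deg Q ω v : ℝ) <
          ((#Q : ℝ) - 1) + ((n : ℝ) - #Q) / 2 - √(n * Real.log n)} := by
        refine (measureReal_mono ?_ (measure_ne_top _ _)).trans (measureReal_biUnion_finset_le Q _)
        rintro ω ⟨v, hv, h⟩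
        exact Set.mem_biUnion hv h
    _ ≤ ∑ _v ∈ Q, ((n : ℝ) ^ 2)⁻¹ := sum_le_sum fun v hv => plantedClique_real_deg_lt_le hv
    _ ≤ n * ((n : ℝ) ^ 2)⁻¹ := by
        rw [sum_const, nsmul_eq_mul]
        gcongr
        exact_mod_cast (card_le_univ Q).trans_eq (Fintype.card_fin n)
    _ = 1 / n := by rw [← div_eq_mul_inv, sq, div_self_mul_self', one_div]

theorem clique_vertex_degree_lower (n k : ℕ) (hn : 2 ≤ n) (hk1 : 1 ≤ k) (hkn : k ≤ n)
    (Q : Finset (Fin n)) (hQ : Q.card = k) :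
    plantedClique n Q {ω : Ω n Q | ∃ v ∈ Q,
        (deg Q ω v : ℝ) <
          ((k : ℝ) - 1) + ((n : ℝ) - k) / 2 - Real.sqrt (n * Real.log n)} ≤
      ENNReal.ofReal (1 / n) :=
  clique_vertex_degree_lower_general n k Q hQ

end Stmt2
end

section
/- For every cache size k ≥ 1 and every request sequence σ_1,…,σ_m over the pages Fin(k+1), there exists a valid offline schedule C_0, C_1, …, C_m such that any two distinct fault steps i < j satisfy j − i ≥ k (consecutive faults are at least k requests apart). -/
namespace Stmt8

/-- `Cs 0, Cs 1, …, Cs m` is a valid offline schedule of cache states for the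
request sequence `σ` with cache size `k`: each state holds at most `k` pages,
each requested page is in the cache right after its request, and the only page
that may enter the cache at step `i` is the requested page `σ i`. -/
def IsValidSchedule (k m : ℕ) (σ : Fin m → Fin (k + 1))
    (Cs : Fin (m + 1) → Finset (Fin (k + 1))) : Prop :=
  (∀ j : Fin (m + 1), (Cs j).card ≤ k) ∧
    ∀ i : Fin m, σ i ∈ Cs i.succ ∧ Cs i.succ ⊆ Cs i.castSucc ∪ {σ i}

/-- The schedule faults at step `i` if the requested page was not already cached. -/
def FaultAt (k m : ℕ) (σ : Fin m → Fin (k + 1))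
    (Cs : Fin (m + 1) → Finset (Fin (k + 1))) (i : Fin m) : Prop :=
  σ i ∉ Cs i.castSucc

end Stmt8

/-!
The cache always holds every page but one, the *absent* page. A fault happens exactly when the
absent page is requested; the faulting request then takes its place in the cache and the page
evicted is one that is not requested during the next `k` steps, which exists because `k`
requests cannot cover all `k + 1` pages. The absent page therefore stays unrequested for `k`
steps after each fault.
-/

namespace Stmt8

section AbsentPage

variable {α : Type*} [Fintype α] (r : ℕ → α) {k : ℕ} (hα : k < Fintype.card α)

include hα in
theorem exists_forall_Ico_ne (n : ℕ) : ∃ a : α, ∀ t ∈ Set.Ico n (n + k), r t ≠ a := by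
  classical
  have hcard : ((Finset.Ico n (n + k)).image r).card < Finset.univ.card :=
    (Finset.card_image_le.trans_eq (by simp)).trans_lt hα
  obtain ⟨a, -, ha⟩ := Finset.exists_mem_notMem_of_card_lt_card hcard
  exact ⟨a, fun t ht hta => ha (Finset.mem_image.2 ⟨t, by simpa using ht, hta⟩)⟩

noncomputable def unrequested (n : ℕ) : α :=
  (exists_forall_Ico_ne r hα n).choose

theorem ne_unrequested {n t : ℕ} (ht : t ∈ Set.Ico n (n + k)) : r t ≠ unrequested r hα n :=
  (exists_forall_Ico_ne r hα n).choose_spec t ht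

open Classical in
noncomputable def absent : ℕ → α
  | 0 => unrequested r hα 0
  | n + 1 => if r n = absent n then unrequested r hα n else absent n

variable {r hα}

theorem absent_succ_of_eq {n : ℕ} (h : r n = absent r hα n) :
    absent r hα (n + 1) = unrequested r hα n :=
  if_pos h

theorem absent_succ_of_ne {n : ℕ} (h : r n ≠ absent r hα n) :
    absent r hα (n + 1) = absent r hα n :=
  if_neg h

theorem absent_succ_eq_or (n : ℕ) :
    absent r hα (n + 1) = absent r hα n ∨ r n = absent r hα n := by
  by_cases h : r n = absent r hα n
  · exact .inr h
  · exact .inl (absent_succ_of_ne h)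

theorem ne_absent_succ (hk : 0 < k) (n : ℕ) : r n ≠ absent r hα (n + 1) := by
  by_cases h : r n = absent r hα n
  · rw [absent_succ_of_eq h]
    exact ne_unrequested r hα ⟨le_rfl, by omega⟩
  · rwa [absent_succ_of_ne h]

theorem absent_add_succ_of_eq {i d : ℕ} (hi : r i = absent r hα i) (hd : d < k) :
    absent r hα (i + d + 1) = unrequested r hα i := by
  induction d with
  | zero => exact absent_succ_of_eq hi
  | succ d ih =>
    have ih := ih (by omega)
    have hne : r (i + d + 1) ≠ absent r hα (i + d + 1) :=
      ih ▸ ne_unrequested r hα ⟨by omega, by omega⟩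
    rw [← add_assoc, absent_succ_of_ne hne, ih]

theorem add_le_of_eq_absent {i j : ℕ} (hi : r i = absent r hα i) (hj : r j = absent r hα j)
    (hij : i < j) : i + k ≤ j := by
  by_contra! hji
  obtain ⟨d, rfl⟩ : ∃ d, j = i + d + 1 := ⟨j - i - 1, by omega⟩
  rw [absent_add_succ_of_eq hi (by omega)] at hj
  exact ne_unrequested r hα ⟨by omega, hji⟩ hj

end AbsentPage

theorem exists_schedule_with_spread_faults (k : ℕ) (hk : 1 ≤ k) (m : ℕ)
    (σ : Fin m → Fin (k + 1)) :
    ∃ Cs : Fin (m + 1) → Finset (Fin (k + 1)),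
      IsValidSchedule k m σ Cs ∧
        ∀ i j : Fin m, FaultAt k m σ Cs i → FaultAt k m σ Cs j → i < j →
          k ≤ (j : ℕ) - (i : ℕ) := by
  classical
  let r : ℕ → Fin (k + 1) := fun t => if h : t < m then σ ⟨t, h⟩ else 0
  have hr (i : Fin m) : r i = σ i := dif_pos i.isLt
  have hα : k < Fintype.card (Fin (k + 1)) := by simp
  refine ⟨fun j => {absent r hα j}ᶜ, ⟨fun j => ?_, fun i => ⟨?_, ?_⟩⟩, fun i j hi hj hij => ?_⟩
  · simp [Finset.card_compl]
  · simpa [← hr] using ne_absent_succ hk i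
  · intro x
    rcases absent_succ_eq_or (r := r) (hα := hα) i with h | h <;> simp_all
  · simp only [FaultAt, Finset.mem_compl, Finset.mem_singleton, not_not, Fin.val_castSucc,
      ← hr] at hi hj
    have := add_le_of_eq_absent hi hj hij
    omega

end Stmt8
end

section
/- For every cache size k ≥ 1 and every request sequence σ_1,…,σ_m over the pages Fin(k+1), there exists a valid offline schedule C_0, C_1, …, C_m with at most ⌈m/k⌉ faults. -/
namespace Stmt9

/-- `Cs 0, Cs 1, …, Cs m` is a valid offline schedule of cache states for the
request sequence `σ` with cache size `k`: each state holds at most `k` pages,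
each requested page is in the cache right after its request, and the only page
that may enter the cache at step `i` is the requested page `σ i`. -/
def IsValidSchedule (k m : ℕ) (σ : Fin m → Fin (k + 1))
    (Cs : Fin (m + 1) → Finset (Fin (k + 1))) : Prop :=
  (∀ j : Fin (m + 1), (Cs j).card ≤ k) ∧
    ∀ i : Fin m, σ i ∈ Cs i.succ ∧ Cs i.succ ⊆ Cs i.castSucc ∪ {σ i}

/-- The schedule faults at step `i` if the requested page was not already cached. -/
def FaultAt (k m : ℕ) (σ : Fin m → Fin (k + 1))
    (Cs : Fin (m + 1) → Finset (Fin (k + 1))) (i : Fin m) : Prop :=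
  σ i ∉ Cs i.castSucc

/-!
Keep all pages but one in the cache at every time; call the missing page the hole. A fault
happens exactly when the hole is requested. Since only `k` of the `k + 1` pages are requested
in any window of `k` consecutive steps, on a fault at step `j` the cache can evict a page that
is not requested at steps `j, …, j + k - 1`. The next fault is then at step `j + k` at the
earliest, and faults that are `k` apart within `m` steps number at most `⌈m / k⌉`.
-/

open Finset

lemma card_le_ceilDiv_of_separated {m k : ℕ} (hk : 0 < k) (S : Finset (Fin m))
    (hS : ∀ i ∈ S, ∀ j ∈ S, i < j → (i : ℕ) + k ≤ j) : #S ≤ m ⌈/⌉ k := by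
  have hmaps : Set.MapsTo (fun i : Fin m => (i : ℕ) / k) S (range (m ⌈/⌉ k)) := by
    intro i _
    rw [coe_range, Set.mem_Iio, ← not_le, ceilDiv_le_iff_le_mul hk, not_le]
    exact (Nat.mul_div_le i k).trans_lt i.isLt
  have hblock {i j : Fin m} (hi : i ∈ S) (hj : j ∈ S) (hij : i < j) :
      (i : ℕ) / k < j / k :=
    calc (i : ℕ) / k < (i + k) / k := by rw [Nat.add_div_right _ hk]; omega
      _ ≤ j / k := Nat.div_le_div_right (hS i hi j hj hij)
  have hinj : Set.InjOn (fun i : Fin m => (i : ℕ) / k) S := by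
    intro i hi j hj hij
    by_contra hne
    rcases lt_or_gt_of_ne hne with h | h
    · exact (hblock hi hj h).ne hij
    · exact (hblock hj hi h).ne' hij
  simpa using card_le_card_of_injOn _ hmaps hinj

section Hole

variable {α : Type*}

def EvictsUnrequested (k : ℕ) (σ evict : ℕ → α) : Prop :=
  ∀ j, ∀ t ∈ Ico j (j + k), σ t ≠ evict j

lemma exists_evictsUnrequested [Fintype α] [DecidableEq α] {k : ℕ} (hk : k < Fintype.card α)
    (σ : ℕ → α) :
    ∃ evict, EvictsUnrequested k σ evict := by
  have hwindow (j : ℕ) : ∃ p, p ∉ (Ico j (j + k)).image σ := by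
    have hcard : #((Ico j (j + k)).image σ) < #(univ : Finset α) :=
      card_image_le.trans_lt (by simpa using hk)
    obtain ⟨p, -, hp⟩ := exists_mem_notMem_of_card_lt_card hcard
    exact ⟨p, hp⟩
  choose evict hevict using hwindow
  exact ⟨evict, fun j t ht heq => hevict j (mem_image.2 ⟨t, ht, heq⟩)⟩

variable [DecidableEq α] (σ evict : ℕ → α) (p₀ : α)

/-- The page missing from the cache before step `j`, when every fault at a step `j` is served
by evicting `evict j`. -/
def hole : ℕ → α
  | 0 => p₀
  | j + 1 => if σ j = hole j then evict j else hole j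

variable {σ evict p₀}

lemma hole_succ_of_eq {j : ℕ} (h : σ j = hole σ evict p₀ j) :
    hole σ evict p₀ (j + 1) = evict j := by
  simp [hole, h]

lemma hole_succ_of_ne {j : ℕ} (h : σ j ≠ hole σ evict p₀ j) :
    hole σ evict p₀ (j + 1) = hole σ evict p₀ j := by
  simp [hole, h]

variable {k : ℕ} (hev : EvictsUnrequested k σ evict)
include hev

lemma ne_hole_succ (hk : 0 < k) (j : ℕ) : σ j ≠ hole σ evict p₀ (j + 1) := by
  by_cases h : σ j = hole σ evict p₀ j
  · rw [hole_succ_of_eq h]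
    exact hev j j (mem_Ico.2 ⟨le_rfl, by omega⟩)
  · rwa [hole_succ_of_ne h]

lemma hole_add_succ_of_eq {i : ℕ} (h : σ i = hole σ evict p₀ i) :
    ∀ d < k, hole σ evict p₀ (i + d + 1) = evict i
  | 0, _ => hole_succ_of_eq h
  | d + 1, hd => by
    have ih := hole_add_succ_of_eq h d (by omega)
    have hunreq : σ (i + d + 1) ≠ hole σ evict p₀ (i + d + 1) :=
      ih ▸ hev i _ (mem_Ico.2 ⟨by omega, by omega⟩)
    rw [← add_assoc, hole_succ_of_ne hunreq, ih]

lemma add_le_of_eq_hole {i i' : ℕ} (h : σ i = hole σ evict p₀ i)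
    (h' : σ i' = hole σ evict p₀ i') (hii' : i < i') : i + k ≤ i' := by
  by_contra! hlt
  obtain ⟨d, rfl⟩ : ∃ d, i' = i + d + 1 := ⟨i' - i - 1, by omega⟩
  rw [hole_add_succ_of_eq hev h d (by omega)] at h'
  exact hev i _ (mem_Ico.2 ⟨by omega, hlt⟩) h'

end Hole

section Schedule

variable {k m : ℕ} {σ : Fin m → Fin (k + 1)} {τ evict : ℕ → Fin (k + 1)} {p₀ : Fin (k + 1)}

lemma isValidSchedule_erase_hole (hk : 0 < k) (hτ : ∀ i : Fin m, τ i = σ i)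
    (hev : EvictsUnrequested k τ evict) :
    IsValidSchedule k m σ fun j => univ.erase (hole τ evict p₀ j) := by
  refine ⟨fun j => by simp, fun i => ⟨?_, ?_⟩⟩
  · simpa [← hτ] using ne_hole_succ hev hk (p₀ := p₀) i
  · intro x hx
    simp only [Fin.val_succ, Fin.val_castSucc, mem_union, mem_erase, mem_univ, and_true,
      mem_singleton] at hx ⊢
    by_cases h : τ i = hole τ evict p₀ i
    · rw [← hτ, h]
      exact em' _
    · exact Or.inl (hole_succ_of_ne h ▸ hx)

lemma faultAt_erase_hole_iff (hτ : ∀ i : Fin m, τ i = σ i) (i : Fin m) :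
    FaultAt k m σ (fun j => univ.erase (hole τ evict p₀ j)) i ↔ τ i = hole τ evict p₀ i := by
  simp [FaultAt, hτ]

end Schedule

open scoped Classical

theorem exists_schedule_with_few_faults (k : ℕ) (hk : 1 ≤ k) (m : ℕ)
    (σ : Fin m → Fin (k + 1)) :
    ∃ Cs : Fin (m + 1) → Finset (Fin (k + 1)),
      IsValidSchedule k m σ Cs ∧
        (Finset.univ.filter fun i : Fin m => FaultAt k m σ Cs i).card ≤ m ⌈/⌉ k := by
  -- past step `m` the requests are arbitrary; they only serve to make every window full length
  let τ : ℕ → Fin (k + 1) := fun t => if h : t < m then σ ⟨t, h⟩ else 0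
  have hτ (i : Fin m) : τ i = σ i := dif_pos i.isLt
  obtain ⟨evict, hev⟩ := exists_evictsUnrequested (by simp : k < Fintype.card (Fin (k + 1))) τ
  refine ⟨fun j => univ.erase (hole τ evict 0 j), isValidSchedule_erase_hole hk hτ hev, ?_⟩
  refine card_le_ceilDiv_of_separated hk _ fun i hi j hj hij => ?_
  simp only [mem_filter, mem_univ, true_and, faultAt_erase_hole_iff hτ] at hi hj
  exact add_le_of_eq_hole hev hi hj hij

end Stmt9
end

section
/- For every cache size k ≥ 1, every deterministic online paging policy C over the k+1 pages Fin(k+1), and every m ≥ 1, there exists a request sequence σ_1,…,σ_m on which the policy faults at all m steps, while some valid offline schedule for the same sequence faults at most ⌈m/k⌉ times. (Thus the worst-case fault rate of every deterministic policy is 100%, even though the optimal clairvoyant policy's fault rate is at most 1/k.) -/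
namespace Stmt10

/-- `Cs 0, Cs 1, …, Cs m` is a valid offline schedule of cache states for the
request sequence `σ` with cache size `k`: each state holds at most `k` pages,
each requested page is in the cache right after its request, and the only page
that may enter the cache at step `i` is the requested page `σ i`. -/
def IsValidSchedule (k m : ℕ) (σ : Fin m → Fin (k + 1))
    (Cs : Fin (m + 1) → Finset (Fin (k + 1))) : Prop :=
  (∀ j : Fin (m + 1), (Cs j).card ≤ k) ∧
    ∀ i : Fin m, σ i ∈ Cs i.succ ∧ Cs i.succ ⊆ Cs i.castSucc ∪ {σ i}

/-- The schedule faults at step `i` if the requested page was not already cached. -/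
def FaultAt (k m : ℕ) (σ : Fin m → Fin (k + 1))
    (Cs : Fin (m + 1) → Finset (Fin (k + 1))) (i : Fin m) : Prop :=
  σ i ∉ Cs i.castSucc

end Stmt10

/-!
The adversary always requests a page missing from the policy's current cache; one exists because
the cache holds at most `k` of the `k + 1` pages.

Offline, the cache is always all pages but one, the *hole*. Cut time into blocks of `k`
consecutive steps. On a fault at step `t` (a request for the hole) the schedule evicts a page that
is not requested during the rest of `t`'s block; at most `k` requests remain there, so such a page
exists. The new hole is then never requested before the block ends, so every block holds at most
one fault, and `m` steps meet at most `⌈m/k⌉` blocks.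
-/

namespace Stmt10

open scoped Classical

open Finset

section Pages

variable {α : Type*} [Nonempty α]

noncomputable def pageOutside (s : Finset α) : α :=
  Classical.epsilon (· ∉ s)

lemma pageOutside_notMem [Fintype α] {s : Finset α} (hs : #s < Fintype.card α) :
    pageOutside s ∉ s := by
  obtain ⟨a, -, ha⟩ :=
    exists_mem_notMem_of_card_lt_card (s := s) (t := univ) (by rwa [card_univ])
  exact Classical.epsilon_spec (p := (· ∉ s)) ⟨a, ha⟩

noncomputable def adversary (C : List α → Finset α) (n : ℕ) : α :=
  pageOutside (C (List.ofFn fun i : Fin n => adversary C i))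
decreasing_by exact i.isLt

lemma adversary_notMem [Fintype α] {C : List α → Finset α}
    (hC : ∀ h, #(C h) < Fintype.card α) (n : ℕ) :
    adversary C n ∉ C (List.ofFn fun i : Fin n => adversary C i) := by
  rw [adversary]
  exact pageOutside_notMem (hC _)

end Pages

section Blocks

def blockEnd (k t : ℕ) : ℕ := (t / k + 1) * k

lemma blockEnd_sub_le (k t : ℕ) : blockEnd k t - t ≤ k := by
  have := Nat.div_mul_le_self t k
  rw [blockEnd, add_mul, one_mul]
  omega

lemma lt_blockEnd_of_div_eq {k t j : ℕ} (hk : 0 < k) (h : j / k = t / k) : j < blockEnd k t := by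
  rw [blockEnd, ← h, add_one_mul]
  exact Nat.lt_div_mul_add hk

lemma div_lt_ceilDiv {k i m : ℕ} (hk : 0 < k) (hi : i < m) : i / k < m ⌈/⌉ k := by
  rw [← not_le, ceilDiv_le_iff_le_mul hk, not_le]
  exact (Nat.mul_div_le i k).trans_lt hi

end Blocks

section Hole

variable {α : Type*} [Nonempty α] (σ : ℕ → α) (k : ℕ)

noncomputable def freshPage (t : ℕ) : α :=
  pageOutside ((Ico t (blockEnd k t)).image σ)

noncomputable def hole : ℕ → α
  | 0 => freshPage σ k 0
  | t + 1 => if σ t = hole t then freshPage σ k t else hole t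

variable {σ k}

lemma ne_freshPage [Fintype α] (hk : k < Fintype.card α) {t j : ℕ} (htj : t ≤ j)
    (hj : j < blockEnd k t) : σ j ≠ freshPage σ k t := by
  have hcard : #((Ico t (blockEnd k t)).image σ) < Fintype.card α := by
    refine card_image_le.trans_lt (lt_of_le_of_lt ?_ hk)
    rw [Nat.card_Ico]
    exact blockEnd_sub_le k t
  intro h
  have hmem := mem_image_of_mem σ (mem_Ico.2 ⟨htj, hj⟩)
  rw [h] at hmem
  exact pageOutside_notMem hcard hmem

lemma ne_hole_succ [Fintype α] (hk0 : 0 < k) (hk : k < Fintype.card α) (t : ℕ) :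
    σ t ≠ hole σ k (t + 1) := by
  rw [hole]
  split_ifs with hfault
  · exact ne_freshPage hk le_rfl (lt_blockEnd_of_div_eq hk0 rfl)
  · exact hfault

lemma hole_succ_eq_or (t : ℕ) : hole σ k (t + 1) = hole σ k t ∨ σ t = hole σ k t := by
  rw [hole]
  split_ifs with hfault
  · exact Or.inr hfault
  · exact Or.inl rfl

lemma hole_eq_freshPage_of_fault [Fintype α] (hk : k < Fintype.card α) {t : ℕ}
    (hfault : σ t = hole σ k t) :
    ∀ j, t < j → j ≤ blockEnd k t → hole σ k j = freshPage σ k t := by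
  intro j htj
  induction j, htj using Nat.le_induction with
  | base => intro _; rw [hole, if_pos hfault]
  | succ j htj ih =>
    intro hj
    have hhole := ih (by omega)
    rw [hole, if_neg (hhole ▸ ne_freshPage hk (Nat.le_of_succ_le htj) hj), hhole]

lemma not_fault_of_fault [Fintype α] (hk : k < Fintype.card α) {t j : ℕ}
    (hfault : σ t = hole σ k t) (htj : t < j) (hj : j < blockEnd k t) : σ j ≠ hole σ k j := by
  rw [hole_eq_freshPage_of_fault hk hfault j htj hj.le]
  exact ne_freshPage hk htj.le hj

lemma eq_of_faults_of_div_eq [Fintype α] (hk0 : 0 < k) (hk : k < Fintype.card α) {i j : ℕ}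
    (hi : σ i = hole σ k i) (hj : σ j = hole σ k j) (hij : i / k = j / k) : i = j := by
  by_contra hne
  rcases lt_or_gt_of_ne hne with h | h
  · exact not_fault_of_fault hk hi h (lt_blockEnd_of_div_eq hk0 hij.symm) hj
  · exact not_fault_of_fault hk hj h (lt_blockEnd_of_div_eq hk0 hij) hi

lemma card_faults_le [Fintype α] (hk0 : 0 < k) (hk : k < Fintype.card α) (m : ℕ) :
    #{i : Fin m | σ i = hole σ k i} ≤ m ⌈/⌉ k := by
  refine (card_le_card_of_injOn (fun i : Fin m => (i : ℕ) / k)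
    (fun i _ => mem_range.2 (div_lt_ceilDiv hk0 i.isLt)) fun i hi j hj hij => ?_).trans_eq
    (card_range _)
  simp only [coe_filter, mem_univ, true_and, Set.mem_ofPred_eq] at hi hj
  exact Fin.ext (eq_of_faults_of_div_eq hk0 hk hi hj hij)

end Hole

lemma isValidSchedule_compl_hole {k m : ℕ} (σ h : ℕ → Fin (k + 1))
    (hmem : ∀ t, σ t ≠ h (t + 1)) (hstep : ∀ t, h (t + 1) = h t ∨ σ t = h t) :
    IsValidSchedule k m (fun i => σ i) (fun j => {h j}ᶜ) := by
  refine ⟨fun j => ?_, fun i => ⟨?_, ?_⟩⟩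
  · simp [card_compl]
  · simpa using hmem i
  · intro x hx
    simp only [mem_union, mem_compl, mem_singleton, Fin.val_succ, Fin.val_castSucc] at hx ⊢
    rcases hstep i with h' | h'
    · exact Or.inl (h' ▸ hx)
    · rw [← h']
      exact em' _

theorem online_faults_always_offline_rarely_general (k : ℕ) (hk : 1 ≤ k)
    (C : List (Fin (k + 1)) → Finset (Fin (k + 1)))
    (hC : ∀ h : List (Fin (k + 1)), (C h).card ≤ k)
    (m : ℕ) :
    ∃ σ : Fin m → Fin (k + 1),
      (∀ i : Fin m, σ i ∉ C ((List.ofFn σ).take i)) ∧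
        ∃ Cs : Fin (m + 1) → Finset (Fin (k + 1)),
          IsValidSchedule k m σ Cs ∧
            (Finset.univ.filter fun i : Fin m => FaultAt k m σ Cs i).card ≤ m ⌈/⌉ k := by
  have hcard : k < Fintype.card (Fin (k + 1)) := by simp
  have hC' : ∀ h, #(C h) < Fintype.card (Fin (k + 1)) := fun h => (hC h).trans_lt hcard
  set σ := adversary C
  refine ⟨fun i => σ i, fun i => ?_, fun j => {hole σ k j}ᶜ,
    isValidSchedule_compl_hole σ _ (ne_hole_succ hk hcard) hole_succ_eq_or, ?_⟩
  · rw [← Fin.ofFn_take_eq_take_ofFn i.isLt.le]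
    exact adversary_notMem hC' i
  · convert card_faults_le (σ := σ) hk hcard m using 2
    ext i
    simp [FaultAt]

theorem online_faults_always_offline_rarely (k : ℕ) (hk : 1 ≤ k)
    (C : List (Fin (k + 1)) → Finset (Fin (k + 1)))
    (hC : ∀ h : List (Fin (k + 1)), (C h).card ≤ k)
    (m : ℕ) (hm : 1 ≤ m) :
    ∃ σ : Fin m → Fin (k + 1),
      (∀ i : Fin m, σ i ∉ C ((List.ofFn σ).take i)) ∧
        ∃ Cs : Fin (m + 1) → Finset (Fin (k + 1)),
          IsValidSchedule k m σ Cs ∧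
            (Finset.univ.filter fun i : Fin m => FaultAt k m σ Cs i).card ≤ m ⌈/⌉ k :=
  online_faults_always_offline_rarely_general k hk C hC m

end Stmt10
end

section
/- Let (V,w) be a weighted max-cut instance on a finite set V with |V| ≥ 2 in which every unordered pair of distinct vertices has strictly positive weight (a complete weighted graph), let γ > 1, and let S* be a subset of V with ∅ ⊊ S* ⊊ V such that for every γ-perturbation w' of w, S* maximizes cut_{w'} over all subsets of V. Then the maximum cut of the unperturbed instance is unique up to complementation: every subset S ⊆ V maximizing cut_w satisfies S = S* or S = V∖S*. -/
namespace Stmt12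

open scoped Classical

noncomputable section

variable {V : Type*} [Fintype V] [DecidableEq V]

/-- The unordered pair `p` crosses the cut `(S, Sᶜ)`: one endpoint is in `S`
and the other is not. -/
def Crosses (S : Finset V) (p : Sym2 V) : Prop :=
  ∃ u v : V, p = s(u, v) ∧ u ∈ S ∧ v ∉ S

/-- The value of the cut `(S, Sᶜ)` under the weights `w`: the total weight of the
unordered pairs with one endpoint in `S` and the other outside `S`. -/
def cutVal (w : Sym2 V → ℝ) (S : Finset V) : ℝ :=
  ∑ p ∈ Finset.univ.filter (Crosses S), w p

/-- `w'` is a `γ`-perturbation of `w`: every weight is scaled by a factor in `[1, γ]`. -/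
def IsPerturbation (γ : ℝ) (w w' : Sym2 V → ℝ) : Prop :=
  ∀ e : Sym2 V, ∃ α : ℝ, 1 ≤ α ∧ α ≤ γ ∧ w' e = α * w e

/-- `(V, w)` is `γ`-perturbation stable with optimal cut `S*`: for every
`γ`-perturbation `w'` of `w`, every cut whose `w'`-value is at least that of `S*`
is `S*` itself or its complement. -/
def PerturbationStable (γ : ℝ) (w : Sym2 V → ℝ) (Sstar : Finset V) : Prop :=
  ∀ w' : Sym2 V → ℝ, IsPerturbation γ w w' →
    ∀ S : Finset V, cutVal w' Sstar ≤ cutVal w' S → S = Sstar ∨ S = Sstarᶜ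

end

end Stmt12

/-!
Since `w` is itself a `γ`-perturbation, any maximum cut `S` of `w` has the same value as `S*`.
Now scale by `γ` exactly the edges cut by `S`: the value of `S` grows by the factor `γ`, that of
`S*` only on the edges it shares with `S`, so optimality of `S*` forces every edge cut by `S` to be
cut by `S*`. Equal values and positive weights then give equal cut-sets, and a cut-set determines
its side up to complementation.
-/

namespace Stmt12

open scoped Classical

open Finset

section

variable {V : Type*}

lemma crosses_mk_iff {S : Finset V} {u v : V} : Crosses S s(u, v) ↔ (u ∈ S ↔ v ∉ S) := by
  constructor
  · rintro ⟨a, b, h, ha, hb⟩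
    rcases Sym2.eq_iff.mp h with ⟨rfl, rfl⟩ | ⟨rfl, rfl⟩ <;> tauto
  · intro h
    by_cases hu : u ∈ S
    · exact ⟨u, v, rfl, hu, h.mp hu⟩
    · exact ⟨v, u, Sym2.eq_swap, by tauto, hu⟩

lemma not_isDiag_of_crosses {S : Finset V} {p : Sym2 V} (h : Crosses S p) : ¬ p.IsDiag := by
  obtain ⟨u, v, rfl, hu, hv⟩ := h
  rw [Sym2.mk_isDiag_iff]
  rintro rfl
  exact hv hu

noncomputable def cutEdges [Fintype V] (S : Finset V) : Finset (Sym2 V) :=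
  univ.filter (Crosses S)

lemma cutVal_eq_sum_cutEdges [Fintype V] (w : Sym2 V → ℝ) (S : Finset V) :
    cutVal w S = ∑ p ∈ cutEdges S, w p :=
  rfl

lemma pos_of_mem_cutEdges [Fintype V] {w : Sym2 V → ℝ}
    (hpos : ∀ e : Sym2 V, ¬ e.IsDiag → 0 < w e) {S : Finset V} {p : Sym2 V}
    (hp : p ∈ cutEdges S) : 0 < w p :=
  hpos p (not_isDiag_of_crosses (mem_filter.mp hp).2)

lemma eq_or_eq_compl_of_cutEdges_eq [Fintype V] [DecidableEq V] {S T : Finset V}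
    (h : cutEdges S = cutEdges T) : S = T ∨ S = Tᶜ := by
  have hcross (a x : V) : (a ∈ S ↔ x ∉ S) ↔ (a ∈ T ↔ x ∉ T) := by
    simpa only [cutEdges, mem_filter, mem_univ, true_and, crosses_mk_iff] using
      Finset.ext_iff.mp h s(a, x)
  rcases isEmpty_or_nonempty V with hV | ⟨⟨a⟩⟩
  · exact Or.inl (Subsingleton.elim S T)
  · by_cases ha : a ∈ S ↔ a ∈ T
    · refine Or.inl (Finset.ext fun x => ?_)
      have := hcross a x
      tauto
    · refine Or.inr (Finset.ext fun x => ?_)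
      have := hcross a x
      rw [mem_compl]
      tauto

lemma subset_of_sum_le_sum_of_subset {ι : Type*} {s t : Finset ι} {f : ι → ℝ} (hst : s ⊆ t)
    (hf : ∀ i ∈ t, 0 < f i) (h : ∑ i ∈ t, f i ≤ ∑ i ∈ s, f i) : t ⊆ s := by
  intro i hi
  by_contra his
  exact (sum_lt_sum_of_subset hst hi his (hf i hi) fun j hj _ => (hf j hj).le).not_ge h

lemma isPerturbation_self {γ : ℝ} (hγ : 1 ≤ γ) (w : Sym2 V → ℝ) :
    IsPerturbation γ w w :=
  fun _ => ⟨1, le_rfl, hγ, (one_mul _).symm⟩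

def scaleOn [DecidableEq V] (γ : ℝ) (A : Finset (Sym2 V)) (w : Sym2 V → ℝ) :
    Sym2 V → ℝ :=
  fun p => if p ∈ A then γ * w p else w p

lemma isPerturbation_scaleOn [DecidableEq V] {γ : ℝ} (hγ : 1 ≤ γ) (A : Finset (Sym2 V))
    (w : Sym2 V → ℝ) :
    IsPerturbation γ w (scaleOn γ A w) := by
  intro p
  by_cases hp : p ∈ A
  · exact ⟨γ, hγ, le_rfl, if_pos hp⟩
  · exact ⟨1, le_rfl, hγ, (if_neg hp).trans (one_mul _).symm⟩

lemma sum_scaleOn [DecidableEq V] (γ : ℝ) (A B : Finset (Sym2 V)) (w : Sym2 V → ℝ) :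
    ∑ p ∈ B, scaleOn γ A w p = ∑ p ∈ B, w p + (γ - 1) * ∑ p ∈ B ∩ A, w p := by
  have hpoint (p : Sym2 V) : scaleOn γ A w p = w p + (γ - 1) * (if p ∈ A then w p else 0) := by
    unfold scaleOn
    split_ifs <;> ring
  simp only [hpoint, sum_add_distrib, ← mul_sum, sum_ite_mem]

end

theorem stable_implies_unique_max_cut_general {V : Type*} [Fintype V] [DecidableEq V]
    (w : Sym2 V → ℝ)
    (hpos : ∀ e : Sym2 V, ¬ e.IsDiag → 0 < w e)
    (γ : ℝ) (hγ : 1 < γ) (Sstar : Finset V)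
    (hopt : ∀ w' : Sym2 V → ℝ, IsPerturbation γ w w' →
      ∀ S : Finset V, cutVal w' S ≤ cutVal w' Sstar) :
    ∀ S : Finset V, (∀ S' : Finset V, cutVal w S' ≤ cutVal w S) →
      S = Sstar ∨ S = Sstarᶜ := by
  intro S hS
  have heq : cutVal w S = cutVal w Sstar :=
    (hopt w (isPerturbation_self hγ.le w) S).antisymm (hS Sstar)
  have hscaled := hopt _ (isPerturbation_scaleOn hγ.le (cutEdges S) w) S
  simp only [cutVal_eq_sum_cutEdges, sum_scaleOn, inter_self] at heq hscaled
  have hle : ∑ p ∈ cutEdges S, w p ≤ ∑ p ∈ cutEdges Sstar ∩ cutEdges S, w p :=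
    le_of_mul_le_mul_left (by linarith) (sub_pos.mpr hγ)
  have hsub : cutEdges S ⊆ cutEdges Sstar :=
    (subset_of_sum_le_sum_of_subset inter_subset_right
      (fun _ hp => pos_of_mem_cutEdges hpos hp) hle).trans inter_subset_left
  exact eq_or_eq_compl_of_cutEdges_eq <| hsub.antisymm <|
    subset_of_sum_le_sum_of_subset hsub (fun _ hp => pos_of_mem_cutEdges hpos hp) heq.ge

theorem stable_implies_unique_max_cut {V : Type*} [Fintype V] [DecidableEq V]
    (hV : 2 ≤ Fintype.card V)
    (w : Sym2 V → ℝ) (hw : ∀ e : Sym2 V, 0 ≤ w e)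
    (hpos : ∀ e : Sym2 V, ¬ e.IsDiag → 0 < w e)
    (γ : ℝ) (hγ : 1 < γ) (Sstar : Finset V)
    (hne : Sstar.Nonempty) (hproper : Sstar ≠ Finset.univ)
    (hopt : ∀ w' : Sym2 V → ℝ, IsPerturbation γ w w' →
      ∀ S : Finset V, cutVal w' S ≤ cutVal w' Sstar) :
    ∀ S : Finset V, (∀ S' : Finset V, cutVal w S' ≤ cutVal w S) →
      S = Sstar ∨ S = Sstarᶜ :=
  stable_implies_unique_max_cut_general w hpos γ hγ Sstar hopt

end Stmt12
end
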